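/- arXiv:1304.4199 — 2 statements merged into one kernel-verified Lean document; each statement's English description precedes it below -/
import Mathlib

section
/- Consider the real-valued function h(λ) = ε(λ)·λ where ε(λ) = ((K-λ)β*)/(N² - N(K-λ-1)β*) on [1, K-1], with parameters N > 0, β* > 0, K ≥ 2 satisfying N > (K-1)β*. Then h is concave on [1, K-1]. -/
/-!
With `A = N (N - (K-1)β) > 0` and `B = Nβ > 0` the function is `β(K - λ)λ / (A + Bλ)`.
Dividing the numerator `(u - vλ)λ` by `a + bλ` leaves an affine quotient and the remainder
`-a (v a + u b) / b²`, so the function is affine minus a nonnegative multiple of the convex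
function `(a + bλ)⁻¹` whenever `a (v a + u b) ≥ 0`.
-/

open Set

section

variable {𝕜 : Type*} [Field 𝕜] [LinearOrder 𝕜] [IsStrictOrderedRing 𝕜]

lemma convexOn_inv_add_mul (a b : 𝕜) :
    ConvexOn 𝕜 {x | 0 < a + b * x} fun x => (a + b * x)⁻¹ := by
  have hline (x : 𝕜) : AffineMap.lineMap a (a + b) x = a + b * x := by
    rw [AffineMap.lineMap_apply_ring']
    ring
  simpa [Function.comp_def, preimage, hline] using
    (convexOn_zpow (𝕜 := 𝕜) (-1)).comp_affineMap (AffineMap.lineMap a (a + b))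

lemma concaveOn_sub_mul_mul_div_add_mul {a b u v : 𝕜} (hb : b ≠ 0)
    (hrem : 0 ≤ a * (v * a + u * b)) :
    ConcaveOn 𝕜 {x | 0 < a + b * x} fun x => (u - v * x) * x / (a + b * x) := by
  set s : Set 𝕜 := {x | 0 < a + b * x}
  have hs : Convex 𝕜 s := (convexOn_inv_add_mul a b).1
  have hquot : ConcaveOn 𝕜 s fun x => -v / b * x + (u * b + v * a) / b ^ 2 :=
    ((LinearMap.mul 𝕜 𝕜 (-v / b)).concaveOn hs).add_const _
  have hrem' : ConvexOn 𝕜 s fun x => a * (v * a + u * b) / b ^ 2 * (a + b * x)⁻¹ :=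
    (convexOn_inv_add_mul a b).smul (by positivity)
  refine (hquot.sub hrem').congr fun x (hx : 0 < a + b * x) => ?_
  simp only [Pi.sub_apply]
  field_simp
  ring

end

theorem stmt_5_general (K : ℕ) (N β : ℝ) (hN : 0 < N) (hβ : 0 < β)
    (hload : ((K : ℝ) - 1) * β < N) :
    ConcaveOn ℝ (Set.Icc (1 : ℝ) ((K : ℝ) - 1))
      (fun lam : ℝ => (((K : ℝ) - lam) * β / (N ^ 2 - N * ((K : ℝ) - lam - 1) * β)) * lam) := by
  have hA : 0 < N ^ 2 - N * ((K : ℝ) - 1) * β := by nlinarith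
  have hconc := concaveOn_sub_mul_mul_div_add_mul (a := N ^ 2 - N * ((K : ℝ) - 1) * β)
    (u := K * β) (v := β) (mul_pos hN hβ).ne' (by positivity)
  refine (hconc.subset ?_ (convex_Icc _ _)).congr fun lam _ => ?_
  · exact fun lam hlam => add_pos hA (mul_pos (mul_pos hN hβ) (by linarith [hlam.1]))
  · ring

/-- The function `h(λ) = ε(λ)·λ` with `ε(λ) = (K-λ)β*/(N² - N(K-λ-1)β*)` is
concave on `[1, K-1]`, given `N > (K-1)β*`. -/
theorem stmt_5 (K : ℕ) (hK : 2 ≤ K) (N β : ℝ) (hN : 0 < N) (hβ : 0 < β)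
    (hload : ((K : ℝ) - 1) * β < N) :
    ConcaveOn ℝ (Set.Icc (1 : ℝ) ((K : ℝ) - 1))
      (fun lam : ℝ => (((K : ℝ) - lam) * β / (N ^ 2 - N * ((K : ℝ) - lam - 1) * β)) * lam) :=
  stmt_5_general K N β hN hβ hload
end

section
/- In the limit where K/N → 0 and c → 0, the optimal fraction λ*/K with λ* = (1 + N/c)(1 - √(1 - (K/N)·c/(c/N + 1))) tends to 1/2. -/
/-!
Multiplying `1 - √(1 - x)` by its conjugate, with `x = (K/N) · c/(c/N + 1) = Kc/(c + N)` and
`(1 + N/c) · x = K`, gives the closed form `λ* = K / (1 + √(1 - Kc/(c + N)))` once `N ≥ Kc - c`.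
As `N → ∞` the root tends to `1`, so `λ* → K/2` already for every fixed `c > 0`, and the
outer limit in `c` is that of a constant.
-/

open Filter Topology

noncomputable def optimalLeaders (K c N : ℝ) : ℝ :=
  (1 + N / c) * (1 - √(1 - (K / N) * (c / (c / N + 1))))

lemma mul_one_sub_eq_div_one_add {a s K : ℝ} (hs : 0 ≤ s) (h : a * (1 - s ^ 2) = K) :
    a * (1 - s) = K / (1 + s) := by
  rw [eq_div_iff (by positivity), ← h]
  ring

lemma optimalLeaders_eq {K c N : ℝ} (hc : 0 < c) (hN : 0 < N) (hKc : K * c ≤ c + N) :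
    optimalLeaders K c N = K / (1 + √(1 - K * c / (c + N))) := by
  have hcN : 0 < c + N := by positivity
  have harg : (K / N) * (c / (c / N + 1)) = K * c / (c + N) := by
    field_simp
  have hsq : √(1 - K * c / (c + N)) ^ 2 = 1 - K * c / (c + N) :=
    Real.sq_sqrt (by rwa [sub_nonneg, div_le_one hcN])
  rw [optimalLeaders, harg]
  refine mul_one_sub_eq_div_one_add (Real.sqrt_nonneg _) ?_
  rw [hsq]
  field_simp
  ring

lemma tendsto_div_one_add_sqrt_atTop (K c : ℝ) :
    Tendsto (fun N : ℝ => K / (1 + √(1 - K * c / (c + N)))) atTop (𝓝 (K / 2)) := by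
  have hx : Tendsto (fun N : ℝ => K * c / (c + N)) atTop (𝓝 0) :=
    tendsto_const_nhds.div_atTop (tendsto_atTop_add_const_left _ c tendsto_id)
  have hroot : Tendsto (fun N : ℝ => 1 + √(1 - K * c / (c + N))) atTop (𝓝 2) := by
    simpa [one_add_one_eq_two] using ((tendsto_const_nhds (x := (1 : ℝ))).sub hx).sqrt.const_add 1
  exact tendsto_const_nhds.div hroot two_ne_zero

lemma tendsto_optimalLeaders_atTop (K : ℝ) {c : ℝ} (hc : 0 < c) :
    Tendsto (optimalLeaders K c) atTop (𝓝 (K / 2)) := by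
  refine (tendsto_div_one_add_sqrt_atTop K c).congr' ?_
  filter_upwards [eventually_gt_atTop 0, eventually_ge_atTop (K * c - c)] with N hN hKc
  exact (optimalLeaders_eq hc hN (by linarith)).symm

theorem stmt_7_general (K : ℝ) :
    ∃ Lim : ℝ → ℝ,
      (∀ c : ℝ, 0 < c →
        Filter.Tendsto
          (fun N : ℝ =>
            (1 + N / c) * (1 - Real.sqrt (1 - (K / N) * (c / (c / N + 1)))))
          Filter.atTop (nhds (Lim c))) ∧
      Filter.Tendsto Lim (nhdsWithin 0 (Set.Ioi 0)) (nhds (K / 2)) :=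
  ⟨fun _ => K / 2, fun _ hc => tendsto_optimalLeaders_atTop K hc, tendsto_const_nhds⟩

/-- In the iterated limit `N → ∞` then `c → 0⁺`, the optimal number of
non-cognitive transmitters `λ* = (1 + N/c)(1 - √(1 - (K/N) c/(c/N + 1)))`
tends to `K/2`. -/
theorem stmt_7 (K : ℝ) (hK : 0 < K) :
    ∃ Lim : ℝ → ℝ,
      (∀ c : ℝ, 0 < c →
        Filter.Tendsto
          (fun N : ℝ =>
            (1 + N / c) * (1 - Real.sqrt (1 - (K / N) * (c / (c / N + 1)))))
          Filter.atTop (nhds (Lim c))) ∧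
      Filter.Tendsto Lim (nhdsWithin 0 (Set.Ioi 0)) (nhds (K / 2)) :=
  stmt_7_general K
end
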